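/- arXiv:1302.4004 — 5 statements merged into one kernel-verified Lean document; each statement's English description precedes it below -/
import Mathlib

section
/- In the Hopf algebra of rooted trees, the coproduct Δ is coassociative: (Δ ⊗ id) ∘ Δ = (id ⊗ Δ) ∘ Δ. -/
/-! Both iterated coproducts `(Δ ⊗ id) ∘ Δ` and `(id ⊗ Δ) ∘ Δ` are algebra homomorphisms, so the
elements on which they agree form a subalgebra, and it suffices to treat single trees. The defining
recursion says that `B₊` is a Hochschild 1-cocycle, `Δ ∘ B₊ = B₊ ⊗ 1 + (id ⊗ B₊) ∘ Δ`, and a short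
computation shows that such an operator carries coassociative elements to coassociative elements.
Induction on trees finishes the proof: the tree `B F` is `B₊` applied to the forest `F`, a product
of smaller trees. -/

open TensorProduct

noncomputable section

/-- The Hopf algebra of rooted trees as a vector space / commutative algebra:
the free commutative `ℚ`-algebra on rooted trees, i.e. the monoid algebra of the
commutative monoid of forests (multisets of trees). -/
abbrev Hrt (T : Type) : Type := AddMonoidAlgebra ℚ (Multiset T)

/-- The basis element of `Hrt T` corresponding to a forest `F`. -/
def frt {T : Type} (F : Multiset T) : Hrt T := AddMonoidAlgebra.single F 1

/-- The basis element of `Hrt T` corresponding to a single rooted tree `t`. -/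
def tre {T : Type} (t : T) : Hrt T := frt {t}

open LinearMap

section Coassociativity

variable {R M N P Q : Type*} [CommSemiring R] [AddCommMonoid M] [Module R M]
  [AddCommMonoid N] [Module R N] [AddCommMonoid P] [Module R P] [AddCommMonoid Q] [Module R Q]

lemma assoc_lTensor_tmul (f : N →ₗ[R] P) (y : M ⊗[R] N) (q : Q) :
    TensorProduct.assoc R M P Q (lTensor M f y ⊗ₜ q) = lTensor M ((mk R P Q).flip q ∘ₗ f) y := by
  induction y using TensorProduct.induction_on with
  | zero => simp
  | tmul m n => simp
  | add u v hu hv => simp only [map_add, add_tmul, hu, hv]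

lemma assoc_rTensor_lTensor {Q' : Type*} [AddCommMonoid Q'] [Module R Q'] (f : M →ₗ[R] N ⊗[R] P)
    (g : Q →ₗ[R] Q') (z : M ⊗[R] Q) :
    TensorProduct.assoc R N P Q' (rTensor Q' f (lTensor M g z))
      = lTensor N (lTensor P g) (TensorProduct.assoc R N P Q (rTensor Q f z)) := by
  rw [← comp_apply (rTensor Q' f), rTensor_comp_lTensor, ← lTensor_comp_rTensor, comp_apply,
    lTensor_tensor, comp_apply, comp_apply, LinearEquiv.coe_coe, LinearEquiv.apply_symm_apply]
  rfl

def IsCoassocAt (Δ : M →ₗ[R] M ⊗[R] M) (x : M) : Prop :=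
  TensorProduct.assoc R M M M (rTensor M Δ (Δ x)) = lTensor M Δ (Δ x)

lemma IsCoassocAt.of_cocycle {Δ : M →ₗ[R] M ⊗[R] M} {L : M →ₗ[R] M} {e : M}
    (he : Δ e = e ⊗ₜ e) (hL : Δ ∘ₗ L = (mk R M M).flip e ∘ₗ L + lTensor M L ∘ₗ Δ) {x : M}
    (hx : IsCoassocAt Δ x) : IsCoassocAt Δ (L x) := by
  have hLx : Δ (L x) = L x ⊗ₜ e + lTensor M L (Δ x) := congr($hL x)
  have hleft : TensorProduct.assoc R M M M (rTensor M Δ (Δ (L x)))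
      = L x ⊗ₜ (e ⊗ₜ e) + lTensor M ((mk R M M).flip e ∘ₗ L) (Δ x)
        + lTensor M (lTensor M L) (lTensor M Δ (Δ x)) := by
    rw [hLx, map_add, map_add, rTensor_tmul, hLx, add_tmul, map_add, assoc_tmul,
      assoc_lTensor_tmul, assoc_rTensor_lTensor, hx]
  have hright : lTensor M Δ (Δ (L x))
      = L x ⊗ₜ (e ⊗ₜ e) + lTensor M ((mk R M M).flip e ∘ₗ L) (Δ x)
        + lTensor M (lTensor M L) (lTensor M Δ (Δ x)) := by
    rw [hLx, map_add, lTensor_tmul, he, ← lTensor_comp_apply, ← lTensor_comp_apply, hL,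
      lTensor_add, LinearMap.add_apply, add_assoc]
  exact hleft.trans hright.symm

variable {A : Type*} [CommSemiring A] [Algebra R A]

def coassocSubalgebra (Δ : A →ₐ[R] A ⊗[R] A) : Subalgebra R A :=
  AlgHom.equalizer
    ((Algebra.TensorProduct.assoc R R R A A A).toAlgHom.comp
      ((Algebra.TensorProduct.map Δ (AlgHom.id R A)).comp Δ))
    ((Algebra.TensorProduct.map (AlgHom.id R A) Δ).comp Δ)

lemma mem_coassocSubalgebra {Δ : A →ₐ[R] A ⊗[R] A} {x : A} :
    x ∈ coassocSubalgebra Δ ↔ IsCoassocAt Δ.toLinearMap x :=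
  Iff.rfl

end Coassociativity

namespace Hrt

variable {T : Type}

lemma frt_add (F G : Multiset T) : frt (F + G) = frt F * frt G := by
  simp [frt, AddMonoidAlgebra.single_mul_single]

lemma single_eq_smul_frt (F : Multiset T) (b : ℚ) :
    (AddMonoidAlgebra.single F b : Hrt T) = b • frt F := by
  rw [frt, AddMonoidAlgebra.smul_single', mul_one]

lemma linearMap_ext_frt {M : Type*} [AddCommMonoid M] [Module ℚ M] {f g : Hrt T →ₗ[ℚ] M}
    (h : ∀ F, f (frt F) = g (frt F)) : f = g :=
  AddMonoidAlgebra.lhom_ext' fun F => LinearMap.ext fun b => by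
    simp only [comp_apply, AddMonoidAlgebra.lsingle_apply, single_eq_smul_frt, map_smul, h]

lemma frt_mem_of_forall_tre_mem {S : Subalgebra ℚ (Hrt T)} {F : Multiset T}
    (h : ∀ t ∈ F, tre t ∈ S) : frt F ∈ S := by
  induction F using Multiset.induction_on with
  | empty => exact S.one_mem
  | cons t F ih =>
    rw [← Multiset.singleton_add, frt_add]
    exact S.mul_mem (h t (Multiset.mem_cons_self t F))
      (ih fun s hs => h s (Multiset.mem_cons_of_mem hs))

lemma mem_of_forall_tre_mem {S : Subalgebra ℚ (Hrt T)} (h : ∀ t, tre t ∈ S) (a : Hrt T) :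
    a ∈ S := by
  induction a using AddMonoidAlgebra.induction_linear with
  | zero => exact S.zero_mem
  | add x y hx hy => exact S.add_mem hx hy
  | single F b =>
    rw [single_eq_smul_frt]
    exact S.smul_mem (frt_mem_of_forall_tre_mem fun t _ => h t) b

end Hrt

theorem rootedTree_coproduct_coassoc_general
    (T : Type) (B : Multiset T → T)
    (hind : ∀ P : T → Prop,
      (∀ F : Multiset T, (∀ s ∈ F, P s) → P (B F)) → ∀ t, P t)
    (Bp : Hrt T →ₗ[ℚ] Hrt T) (hBp : ∀ F : Multiset T, Bp (frt F) = tre (B F))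
    (Δ : Hrt T →ₐ[ℚ] Hrt T ⊗[ℚ] Hrt T)
    (hΔ : ∀ F : Multiset T,
      Δ (tre (B F)) = tre (B F) ⊗ₜ[ℚ] 1 + (LinearMap.lTensor (Hrt T) Bp) (Δ (frt F))) :
    ∀ a : Hrt T,
      (TensorProduct.assoc ℚ (Hrt T) (Hrt T) (Hrt T))
          ((LinearMap.rTensor (Hrt T) Δ.toLinearMap) (Δ a))
        = (LinearMap.lTensor (Hrt T) Δ.toLinearMap) (Δ a) := by
  have hcocycle : Δ.toLinearMap ∘ₗ Bp
      = (mk ℚ (Hrt T) (Hrt T)).flip 1 ∘ₗ Bp + lTensor (Hrt T) Bp ∘ₗ Δ.toLinearMap :=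
    Hrt.linearMap_ext_frt fun F => by simpa [hBp] using hΔ F
  have hunit : Δ.toLinearMap 1 = 1 ⊗ₜ 1 := map_one Δ
  have htree : ∀ t, tre t ∈ coassocSubalgebra Δ := hind _ fun F ih => by
    rw [← hBp, mem_coassocSubalgebra]
    exact (mem_coassocSubalgebra.1 (Hrt.frt_mem_of_forall_tre_mem ih)).of_cocycle hunit hcocycle
  exact fun a => mem_coassocSubalgebra.1 (Hrt.mem_of_forall_tre_mem htree a)

/-- **Coassociativity of the rooted tree coproduct.**
Here `T` is the type of (non-planar) rooted trees: it comes with a bijection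
`B = B₊` from forests (multisets of trees) to trees sending a forest to the tree obtained
by grafting its members onto a new root, and satisfies the corresponding induction
principle.  `Bp` is the linear extension of `B₊` to `Hrt T`, and `Δ` is the admissible-cut
coproduct, characterized as the algebra homomorphism satisfying
`Δ(B₊(w)) = B₊(w) ⊗ 1 + (id ⊗ B₊)(Δ w)`.  Then `Δ` is coassociative:
`(Δ ⊗ id) ∘ Δ = (id ⊗ Δ) ∘ Δ`. -/
theorem rootedTree_coproduct_coassoc
    (T : Type) (B : Multiset T → T) (hB : Function.Bijective B)
    (hind : ∀ P : T → Prop,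
      (∀ F : Multiset T, (∀ s ∈ F, P s) → P (B F)) → ∀ t, P t)
    (Bp : Hrt T →ₗ[ℚ] Hrt T) (hBp : ∀ F : Multiset T, Bp (frt F) = tre (B F))
    (Δ : Hrt T →ₐ[ℚ] Hrt T ⊗[ℚ] Hrt T)
    (hΔ : ∀ F : Multiset T,
      Δ (tre (B F)) = tre (B F) ⊗ₜ[ℚ] 1 + (LinearMap.lTensor (Hrt T) Bp) (Δ (frt F))) :
    ∀ a : Hrt T,
      (TensorProduct.assoc ℚ (Hrt T) (Hrt T) (Hrt T))
          ((LinearMap.rTensor (Hrt T) Δ.toLinearMap) (Δ a))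
        = (LinearMap.lTensor (Hrt T) Δ.toLinearMap) (Δ a) :=
  rootedTree_coproduct_coassoc_general T B hind Bp hBp Δ hΔ

end
end

section
/- The graded connected bialgebra of rooted trees admits an antipode S, satisfying the recursion S(t) = -t - Σ_{c proper admissible cut} P_c(t)·S(R_c(t)) for every rooted tree t. -/
open TensorProduct

noncomputable section

/-!
Give each tree its number of vertices `deg`. The cocycle identity
`Δ (B₊ x) = B₊ x ⊗ 1 + (id ⊗ B₊) (Δ x)` shows, by induction on trees, that all right-hand
factors of `Δ t - 1 ⊗ t` have degree `< deg t`, so `m ((id ⊗ S) (Δ t)) = 0` can be solved for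
`S t` by recursion on the degree; the flipped coproduct, which has the same property, gives `S'`
with `m ((S' ⊗ id) (Δ t)) = 0`. The same identity makes `Δ` coassociative and counital, so `Hrt T`
is a bialgebra, and in its convolution monoid the left inverse `S'` and the right inverse `S`
of the identity coincide.
-/

namespace RootedTree

variable {T : Type}

lemma frt_zero : frt (0 : Multiset T) = 1 := rfl

lemma frt_add (F G : Multiset T) : frt (F + G) = frt F * frt G := by
  simp [frt, AddMonoidAlgebra.single_mul_single]

lemma frt_cons (s : T) (F : Multiset T) : frt (s ::ₘ F) = tre s * frt F := by
  rw [tre, ← frt_add, Multiset.singleton_add]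

lemma single_eq_smul_frt (F : Multiset T) (c : ℚ) : AddMonoidAlgebra.single F c = c • frt F := by
  rw [frt, AddMonoidAlgebra.smul_single', mul_one]

section AlgHom

variable {A : Type} [Semiring A] [Algebra ℚ A]

lemma algHom_frt_eq {φ ψ : Hrt T →ₐ[ℚ] A} {F : Multiset T}
    (h : ∀ s ∈ F, φ (tre s) = ψ (tre s)) : φ (frt F) = ψ (frt F) := by
  induction F using Multiset.induction with
  | empty => rw [frt_zero, map_one, map_one]
  | cons s F ih =>
    rw [frt_cons, map_mul, map_mul, h s (Multiset.mem_cons_self s F),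
      ih fun s' hs' => h s' (Multiset.mem_cons_of_mem hs')]

lemma algHom_ext_tre {φ ψ : Hrt T →ₐ[ℚ] A} (h : ∀ t, φ (tre t) = ψ (tre t)) : φ = ψ :=
  AddMonoidAlgebra.algHom_ext (fun _ => algHom_frt_eq fun s _ => h s) (Subsingleton.elim _ _)

lemma algHom_ext_of_graft {B : Multiset T → T}
    (hind : ∀ P : T → Prop, (∀ F : Multiset T, (∀ s ∈ F, P s) → P (B F)) → ∀ t, P t)
    {φ ψ : Hrt T →ₐ[ℚ] A} (h : ∀ F, φ (frt F) = ψ (frt F) → φ (tre (B F)) = ψ (tre (B F))) :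
    φ = ψ :=
  algHom_ext_tre (hind _ fun F hF => h F (algHom_frt_eq hF))

end AlgHom

section Lift

variable {A : Type} [CommSemiring A] [Algebra ℚ A]

def forestLift (f : T → A) : Hrt T →ₐ[ℚ] A :=
  AddMonoidAlgebra.lift ℚ A (Multiset T)
    { toFun := fun F => ((Multiplicative.toAdd F).map f).prod
      map_one' := by simp
      map_mul' _ _ := by simp [Multiset.prod_add] }

lemma forestLift_frt (f : T → A) (F : Multiset T) : forestLift f (frt F) = (F.map f).prod := by
  rw [forestLift, frt, AddMonoidAlgebra.lift_single, one_smul]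
  rfl

lemma forestLift_tre (f : T → A) (t : T) : forestLift f (tre t) = f t := by
  simp [tre, forestLift_frt]

lemma forestLift_ite_frt {deg : T → ℕ} {n : ℕ} {H : Multiset T} (hH : (H.map deg).sum < n)
    (f : T → A) :
    forestLift (fun s => if deg s < n then f s else 0) (frt H) = forestLift f (frt H) := by
  rw [forestLift_frt, forestLift_frt]
  refine congrArg _ (Multiset.map_congr rfl fun s hs => if_pos ?_)
  exact (Multiset.le_sum_of_mem (Multiset.mem_map_of_mem deg hs)).trans_lt hH

end Lift

theorem exists_deg_graft {B : Multiset T → T} (hB : Function.Bijective B)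
    (hind : ∀ P : T → Prop, (∀ F : Multiset T, (∀ s ∈ F, P s) → P (B F)) → ∀ t, P t) :
    ∃ deg : T → ℕ, ∀ F, deg (B F) = (F.map deg).sum + 1 := by
  set children := Function.surjInv hB.2
  have children_B (F : Multiset T) : children (B F) = F := Function.leftInverse_surjInv hB F
  have hwf : WellFounded fun s t => s ∈ children t :=
    ⟨hind _ fun F hF => ⟨_, fun s hs => hF s (children_B F ▸ hs)⟩⟩
  refine ⟨hwf.fix fun t deg => ((children t).attach.map fun s => deg s.1 s.2).sum + 1,
    fun F => ?_⟩
  rw [hwf.fix_eq, Multiset.attach_map_val' _ (hwf.fix _), children_B]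

section RightDegree

variable (deg : T → ℕ)

def rightDegLT (n : ℕ) : Submodule ℚ (Hrt T ⊗[ℚ] Hrt T) :=
  Submodule.span ℚ {z | ∃ (x : Hrt T) (H : Multiset T), (H.map deg).sum < n ∧ z = x ⊗ₜ frt H}

variable {deg}

lemma tmul_frt_mem_rightDegLT (x : Hrt T) {H : Multiset T} {n : ℕ} (h : (H.map deg).sum < n) :
    x ⊗ₜ frt H ∈ rightDegLT deg n :=
  Submodule.subset_span ⟨x, H, h, rfl⟩

lemma rightDegLT_mono : Monotone (rightDegLT (T := T) deg) :=
  fun _ _ hmn => Submodule.span_mono fun _ ⟨x, H, hH, hz⟩ => ⟨x, H, hH.trans_le hmn, hz⟩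

lemma mul_mem_rightDegLT {a b : ℕ} {x y : Hrt T ⊗[ℚ] Hrt T} (hx : x ∈ rightDegLT deg a)
    (hy : y ∈ rightDegLT deg (b + 1)) : x * y ∈ rightDegLT deg (a + b) := by
  have hxy := Submodule.mul_mem_mul hx hy
  rw [rightDegLT, rightDegLT, Submodule.span_mul_span] at hxy
  refine Submodule.span_le.2 ?_ hxy
  rintro _ ⟨_, ⟨x, H, hH, rfl⟩, _, ⟨y, H', hH', rfl⟩, rfl⟩
  dsimp only
  rw [Algebra.TensorProduct.tmul_mul_tmul, ← frt_add]
  exact tmul_frt_mem_rightDegLT _ (by rw [Multiset.map_add, Multiset.sum_add]; omega)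

lemma rTensor_mem_rightDegLT (f : Hrt T →ₗ[ℚ] Hrt T) {n : ℕ} {z : Hrt T ⊗[ℚ] Hrt T}
    (hz : z ∈ rightDegLT deg n) : LinearMap.rTensor (Hrt T) f z ∈ rightDegLT deg n := by
  have hmap : (rightDegLT deg n).map (LinearMap.rTensor (Hrt T) f) ≤ rightDegLT deg n := by
    rw [rightDegLT, Submodule.map_span_le]
    rintro _ ⟨x, H, hH, rfl⟩
    exact tmul_frt_mem_rightDegLT _ hH
  exact hmap (Submodule.mem_map_of_mem hz)

lemma lTensor_eq_of_mem_rightDegLT {M : Type} [AddCommGroup M] [Module ℚ M] {f g : Hrt T →ₗ[ℚ] M}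
    {n : ℕ} (hfg : ∀ H : Multiset T, (H.map deg).sum < n → f (frt H) = g (frt H))
    {z : Hrt T ⊗[ℚ] Hrt T} (hz : z ∈ rightDegLT deg n) :
    LinearMap.lTensor (Hrt T) f z = LinearMap.lTensor (Hrt T) g z := by
  induction hz using Submodule.span_induction with
  | mem _ h =>
    obtain ⟨x, H, hH, rfl⟩ := h
    rw [LinearMap.lTensor_tmul, LinearMap.lTensor_tmul, hfg H hH]
  | zero => simp
  | add _ _ _ _ h₁ h₂ => rw [map_add, map_add, h₁, h₂]
  | smul c _ _ h => rw [map_smul, map_smul, h]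

lemma algHom_frt_sub_mem_rightDegLT (D : Hrt T →ₐ[ℚ] Hrt T ⊗[ℚ] Hrt T) {F : Multiset T}
    (h : ∀ s ∈ F, D (tre s) - 1 ⊗ₜ tre s ∈ rightDegLT deg (deg s)) :
    D (frt F) - 1 ⊗ₜ frt F ∈ rightDegLT deg (F.map deg).sum := by
  induction F using Multiset.induction with
  | empty => simp [frt_zero, Algebra.TensorProduct.one_def]
  | cons s F ih =>
    have hF := ih fun s' hs' => h s' (Multiset.mem_cons_of_mem hs')
    have hDF : D (frt F) ∈ rightDegLT deg ((F.map deg).sum + 1) := by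
      rw [← sub_add_cancel (D (frt F)) (1 ⊗ₜ frt F)]
      exact add_mem (rightDegLT_mono (Nat.le_succ _) hF) (tmul_frt_mem_rightDegLT _ (by omega))
    have h1s : (1 : Hrt T) ⊗ₜ tre s ∈ rightDegLT deg (deg s + 1) :=
      tmul_frt_mem_rightDegLT _ (by simp)
    have hsplit : D (frt (s ::ₘ F)) - 1 ⊗ₜ frt (s ::ₘ F) =
        (D (tre s) - 1 ⊗ₜ tre s) * D (frt F) + (D (frt F) - 1 ⊗ₜ frt F) * (1 ⊗ₜ tre s) := by
      have h1 : (1 : Hrt T) ⊗ₜ[ℚ] (tre s * frt F) = (1 ⊗ₜ tre s) * (1 ⊗ₜ frt F) := by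
        rw [Algebra.TensorProduct.tmul_mul_tmul, one_mul]
      rw [frt_cons, map_mul, h1]
      ring
    rw [hsplit, Multiset.map_cons, Multiset.sum_cons]
    refine add_mem (mul_mem_rightDegLT (h s (Multiset.mem_cons_self s F)) hDF) ?_
    rw [add_comm]
    exact mul_mem_rightDegLT hF h1s

end RightDegree

section ConvInverse

variable (deg : T → ℕ) (D : T → Hrt T ⊗[ℚ] Hrt T)

/-- Values on trees of a right convolution inverse of the identity with respect to `D`. The
recursive calls are cut off at smaller degree only for termination: when `D t - 1 ⊗ t` lies in
`rightDegLT deg (deg t)`, the cut-off is never seen. -/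
def rightInvTree (t : T) : Hrt T :=
  -LinearMap.mul' ℚ (Hrt T) (LinearMap.lTensor (Hrt T)
    (forestLift fun s => if deg s < deg t then rightInvTree s else 0).toLinearMap
    (D t - 1 ⊗ₜ tre t))
termination_by deg t

theorem exists_algHom_mul'_lTensor_eq_zero
    (hD : ∀ t, D t - 1 ⊗ₜ tre t ∈ rightDegLT deg (deg t)) :
    ∃ S : Hrt T →ₐ[ℚ] Hrt T, ∀ t,
      LinearMap.mul' ℚ (Hrt T) (LinearMap.lTensor (Hrt T) S.toLinearMap (D t)) = 0 := by
  refine ⟨forestLift (rightInvTree deg D), fun t => ?_⟩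
  have htrunc := lTensor_eq_of_mem_rightDegLT
    (f := (forestLift fun s => if deg s < deg t then rightInvTree deg D s else 0).toLinearMap)
    (g := (forestLift (rightInvTree deg D)).toLinearMap)
    (fun H hH => forestLift_ite_frt hH _) (hD t)
  rw [← sub_add_cancel (D t) (1 ⊗ₜ tre t), map_add, map_add, ← htrunc, LinearMap.lTensor_tmul,
    AlgHom.toLinearMap_apply, forestLift_tre, LinearMap.mul'_apply, one_mul, rightInvTree,
    add_neg_cancel]

end ConvInverse

lemma mul'_rTensor_eq_mul'_lTensor_comm {R A : Type} [CommSemiring R] [CommSemiring A]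
    [Algebra R A] (f : A →ₗ[R] A) (z : A ⊗[R] A) :
    LinearMap.mul' R A (LinearMap.rTensor A f z) =
      LinearMap.mul' R A (LinearMap.lTensor A f (Algebra.TensorProduct.comm R A A z)) := by
  change _ = LinearMap.mul' R A (LinearMap.lTensor A f (TensorProduct.comm R A A z))
  rw [LinearMap.lTensor_comm, LinearMap.mul'_comm]

def counit : Hrt T →ₐ[ℚ] ℚ := forestLift 0

lemma counit_tre (t : T) : counit (tre t) = 0 := forestLift_tre _ t

section Graft

variable {B : Multiset T → T} {Bp : Hrt T →ₗ[ℚ] Hrt T} {Δ : Hrt T →ₐ[ℚ] Hrt T ⊗[ℚ] Hrt T}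
  {deg : T → ℕ}

lemma comm_comul_sub_mem_rightDegLT
    (hind : ∀ P : T → Prop, (∀ F : Multiset T, (∀ s ∈ F, P s) → P (B F)) → ∀ t, P t)
    (hΔ : ∀ F : Multiset T,
      Δ (tre (B F)) = tre (B F) ⊗ₜ[ℚ] 1 + (LinearMap.lTensor (Hrt T) Bp) (Δ (frt F)))
    (hdeg : ∀ F : Multiset T, deg (B F) = (F.map deg).sum + 1) :
    ∀ t, Algebra.TensorProduct.comm ℚ (Hrt T) (Hrt T) (Δ (tre t)) - 1 ⊗ₜ tre t ∈
      rightDegLT deg (deg t) := by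
  refine hind _ fun F hF => ?_
  have hF' := algHom_frt_sub_mem_rightDegLT
    ((Algebra.TensorProduct.comm ℚ (Hrt T) (Hrt T)).toAlgHom.comp Δ) hF
  have hDF : Algebra.TensorProduct.comm ℚ (Hrt T) (Hrt T) (Δ (frt F)) ∈
      rightDegLT deg ((F.map deg).sum + 1) := by
    rw [← sub_add_cancel (Algebra.TensorProduct.comm ℚ (Hrt T) (Hrt T) (Δ (frt F))) (1 ⊗ₜ frt F)]
    exact add_mem (rightDegLT_mono (Nat.le_succ _) hF') (tmul_frt_mem_rightDegLT _ (by omega))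
  have hsplit : Algebra.TensorProduct.comm ℚ (Hrt T) (Hrt T) (Δ (tre (B F))) - 1 ⊗ₜ tre (B F) =
      LinearMap.rTensor (Hrt T) Bp (Algebra.TensorProduct.comm ℚ (Hrt T) (Hrt T) (Δ (frt F))) := by
    rw [hΔ, map_add, Algebra.TensorProduct.comm_tmul, add_sub_cancel_left]
    exact (LinearMap.rTensor_comm Bp _).symm
  rw [hsplit, hdeg]
  exact rTensor_mem_rightDegLT Bp hDF

variable (hBp : ∀ F : Multiset T, Bp (frt F) = tre (B F))
include hBp

lemma counit_graft (x : Hrt T) : counit (Bp x) = 0 := by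
  induction x using AddMonoidAlgebra.induction_linear with
  | zero => simp
  | add x y hx hy => rw [map_add, map_add, hx, hy, add_zero]
  | single F c => rw [single_eq_smul_frt, map_smul, map_smul, hBp, counit_tre, smul_zero]

lemma lTensor_graft_mem_rightDegLT (hdeg : ∀ F : Multiset T, deg (B F) = (F.map deg).sum + 1)
    {n : ℕ} {z : Hrt T ⊗[ℚ] Hrt T} (hz : z ∈ rightDegLT deg n) :
    LinearMap.lTensor (Hrt T) Bp z ∈ rightDegLT deg (n + 1) := by
  have hmap : (rightDegLT deg n).map (LinearMap.lTensor (Hrt T) Bp) ≤ rightDegLT deg (n + 1) := by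
    rw [rightDegLT, Submodule.map_span_le]
    rintro _ ⟨x, H, hH, rfl⟩
    rw [LinearMap.lTensor_tmul, hBp]
    exact tmul_frt_mem_rightDegLT _ (by simp [hdeg, hH])
  exact hmap (Submodule.mem_map_of_mem hz)

variable (hΔ : ∀ F : Multiset T,
    Δ (tre (B F)) = tre (B F) ⊗ₜ[ℚ] 1 + (LinearMap.lTensor (Hrt T) Bp) (Δ (frt F)))
include hΔ

lemma comul_graft (x : Hrt T) : Δ (Bp x) = Bp x ⊗ₜ 1 + LinearMap.lTensor (Hrt T) Bp (Δ x) := by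
  induction x using AddMonoidAlgebra.induction_linear with
  | zero => simp
  | add x y hx hy => simp only [map_add, hx, hy, TensorProduct.add_tmul]; abel
  | single F c =>
    rw [single_eq_smul_frt, map_smul, map_smul, map_smul, map_smul, hBp, hΔ, smul_add,
      TensorProduct.smul_tmul']

lemma comul_sub_mem_rightDegLT
    (hind : ∀ P : T → Prop, (∀ F : Multiset T, (∀ s ∈ F, P s) → P (B F)) → ∀ t, P t)
    (hdeg : ∀ F : Multiset T, deg (B F) = (F.map deg).sum + 1) :
    ∀ t, Δ (tre t) - 1 ⊗ₜ tre t ∈ rightDegLT deg (deg t) := by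
  refine hind _ fun F hF => ?_
  have hsplit : Δ (tre (B F)) - 1 ⊗ₜ tre (B F) =
      tre (B F) ⊗ₜ frt 0 + LinearMap.lTensor (Hrt T) Bp (Δ (frt F) - 1 ⊗ₜ frt F) := by
    rw [hΔ, map_sub, LinearMap.lTensor_tmul, hBp, frt_zero]
    abel
  rw [hsplit, hdeg]
  exact add_mem (tmul_frt_mem_rightDegLT _ (by simp))
    (lTensor_graft_mem_rightDegLT hBp hdeg (algHom_frt_sub_mem_rightDegLT Δ hF))

lemma map_id_counit_comp_comul (hB : Function.Surjective B) :
    (Algebra.TensorProduct.map (AlgHom.id ℚ (Hrt T)) counit).comp Δ =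
      ↑(Algebra.TensorProduct.rid ℚ ℚ (Hrt T)).symm := by
  have hgraft (z : Hrt T ⊗[ℚ] Hrt T) :
      Algebra.TensorProduct.map (AlgHom.id ℚ (Hrt T)) counit
        (LinearMap.lTensor (Hrt T) Bp z) = 0 := by
    induction z using TensorProduct.induction_on with
    | zero => simp
    | tmul x y => simp [counit_graft hBp]
    | add x y hx hy => rw [map_add, map_add, hx, hy, add_zero]
  refine algHom_ext_tre fun t => ?_
  obtain ⟨F, rfl⟩ := hB t
  simp [hΔ, hgraft]

/-- The coassociativity defect `(Δ ⊗ id) Δ - (id ⊗ Δ) Δ` on `B₊ F` is `(id ⊗ id ⊗ B₊)` of the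
defect on `F`. -/
lemma coassoc_graft (F : Multiset T) :
    Algebra.TensorProduct.assoc ℚ ℚ ℚ (Hrt T) (Hrt T) (Hrt T)
        (Algebra.TensorProduct.map Δ (AlgHom.id ℚ (Hrt T)) (Δ (tre (B F)))) -
      Algebra.TensorProduct.map (AlgHom.id ℚ (Hrt T)) Δ (Δ (tre (B F))) =
    LinearMap.lTensor (Hrt T) (LinearMap.lTensor (Hrt T) Bp)
      (Algebra.TensorProduct.assoc ℚ ℚ ℚ (Hrt T) (Hrt T) (Hrt T)
          (Algebra.TensorProduct.map Δ (AlgHom.id ℚ (Hrt T)) (Δ (frt F))) -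
        Algebra.TensorProduct.map (AlgHom.id ℚ (Hrt T)) Δ (Δ (frt F))) := by
  have hassoc (w : Hrt T ⊗[ℚ] Hrt T) (y : Hrt T) :
      Algebra.TensorProduct.assoc ℚ ℚ ℚ (Hrt T) (Hrt T) (Hrt T) (w ⊗ₜ Bp y) =
        LinearMap.lTensor (Hrt T) (LinearMap.lTensor (Hrt T) Bp)
          (Algebra.TensorProduct.assoc ℚ ℚ ℚ (Hrt T) (Hrt T) (Hrt T) (w ⊗ₜ y)) := by
    induction w using TensorProduct.induction_on with
    | zero => simp
    | tmul a b => simp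
    | add a b ha hb => simp only [TensorProduct.add_tmul, map_add, ha, hb]
  have hlinear (u : Hrt T ⊗[ℚ] Hrt T) :
      Algebra.TensorProduct.assoc ℚ ℚ ℚ (Hrt T) (Hrt T) (Hrt T)
            (LinearMap.lTensor (Hrt T) Bp u ⊗ₜ 1) +
          Algebra.TensorProduct.assoc ℚ ℚ ℚ (Hrt T) (Hrt T) (Hrt T)
            (Algebra.TensorProduct.map Δ (AlgHom.id ℚ (Hrt T)) (LinearMap.lTensor (Hrt T) Bp u)) -
        Algebra.TensorProduct.map (AlgHom.id ℚ (Hrt T)) Δ (LinearMap.lTensor (Hrt T) Bp u) =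
      LinearMap.lTensor (Hrt T) (LinearMap.lTensor (Hrt T) Bp)
        (Algebra.TensorProduct.assoc ℚ ℚ ℚ (Hrt T) (Hrt T) (Hrt T)
            (Algebra.TensorProduct.map Δ (AlgHom.id ℚ (Hrt T)) u) -
          Algebra.TensorProduct.map (AlgHom.id ℚ (Hrt T)) Δ u) := by
    induction u using TensorProduct.induction_on with
    | zero => simp
    | tmul x y => simp [comul_graft hBp hΔ, hassoc, TensorProduct.tmul_add]
    | add a b ha hb =>
      simp only [map_add, map_sub, TensorProduct.add_tmul] at ha hb ⊢
      linear_combination ha + hb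
  rw [hΔ, map_add, map_add, map_add, Algebra.TensorProduct.map_tmul,
    Algebra.TensorProduct.map_tmul, hΔ, TensorProduct.add_tmul, map_add, ← hlinear]
  simp only [AlgHom.coe_id, id_eq, Algebra.TensorProduct.assoc_tmul, map_one,
    Algebra.TensorProduct.one_def]
  abel

variable (hind : ∀ P : T → Prop, (∀ F : Multiset T, (∀ s ∈ F, P s) → P (B F)) → ∀ t, P t)
include hind

lemma map_counit_id_comp_comul :
    (Algebra.TensorProduct.map counit (AlgHom.id ℚ (Hrt T))).comp Δ =
      ↑(Algebra.TensorProduct.lid ℚ (Hrt T)).symm := by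
  have hgraft (z : Hrt T ⊗[ℚ] Hrt T) :
      Algebra.TensorProduct.map counit (AlgHom.id ℚ (Hrt T)) (LinearMap.lTensor (Hrt T) Bp z) =
        LinearMap.lTensor ℚ Bp (Algebra.TensorProduct.map counit (AlgHom.id ℚ (Hrt T)) z) := by
    induction z using TensorProduct.induction_on with
    | zero => simp
    | tmul x y => simp
    | add x y hx hy => simp only [map_add, hx, hy]
  refine algHom_ext_of_graft hind fun F hF => ?_
  simp only [AlgHom.comp_apply, AlgEquiv.coe_toAlgHom] at hF ⊢
  rw [hΔ, map_add, hgraft, hF, Algebra.TensorProduct.map_tmul, counit_tre]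
  simp [hBp]

lemma coassoc :
    (Algebra.TensorProduct.assoc ℚ ℚ ℚ (Hrt T) (Hrt T) (Hrt T) : _ →ₐ[ℚ] _).comp
        ((Algebra.TensorProduct.map Δ (AlgHom.id ℚ (Hrt T))).comp Δ) =
      (Algebra.TensorProduct.map (AlgHom.id ℚ (Hrt T)) Δ).comp Δ := by
  refine algHom_ext_of_graft hind fun F hF => ?_
  simp only [AlgHom.comp_apply, AlgEquiv.coe_toAlgHom] at hF ⊢
  rw [← sub_eq_zero, coassoc_graft hBp hΔ, hF, sub_self, map_zero]

/-- Not an instance: `Hrt T` already carries Mathlib's monoid-algebra bialgebra structure, in which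
forests are group-like. -/
abbrev bialgebra (hB : Function.Surjective B) : Bialgebra ℚ (Hrt T) :=
  Bialgebra.ofAlgHom Δ counit (coassoc hBp hΔ hind) (map_counit_id_comp_comul hBp hΔ hind)
    (map_id_counit_comp_comul hBp hΔ hB)

lemma eq_of_mul'_lTensor_comul_of_mul'_rTensor_comul (hB : Function.Surjective B)
    {S₁ S₂ : Hrt T →ₐ[ℚ] Hrt T}
    (h₁ : ∀ t, LinearMap.mul' ℚ (Hrt T) (LinearMap.lTensor (Hrt T) S₁.toLinearMap (Δ (tre t))) = 0)
    (h₂ : ∀ t,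
      LinearMap.mul' ℚ (Hrt T) (LinearMap.rTensor (Hrt T) S₂.toLinearMap (Δ (tre t))) = 0) :
    S₁ = S₂ := by
  let _ : Bialgebra ℚ (Hrt T) := bialgebra hBp hΔ hind hB
  have one_tre (t : T) : (1 : WithConv (Hrt T →ₐ[ℚ] Hrt T)).ofConv (tre t) = 0 :=
    (congrArg (algebraMap ℚ (Hrt T)) (counit_tre t)).trans (map_zero _)
  have hS₁ : WithConv.toConv (AlgHom.id ℚ (Hrt T)) * WithConv.toConv S₁ = 1 :=
    WithConv.ext (algHom_ext_tre fun t => (h₁ t).trans (one_tre t).symm)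
  have hS₂ : WithConv.toConv S₂ * WithConv.toConv (AlgHom.id ℚ (Hrt T)) = 1 :=
    WithConv.ext (algHom_ext_tre fun t => (h₂ t).trans (one_tre t).symm)
  exact WithConv.toConv_injective (left_inv_eq_right_inv hS₂ hS₁).symm

end Graft

end RootedTree

/-- **Existence of the antipode.**
`T` is the type of rooted trees (with grafting bijection `B = B₊` and induction
principle) and `Δ` is the admissible-cut coproduct, characterized by
`Δ(B₊(w)) = B₊(w) ⊗ 1 + (id ⊗ B₊)(Δ w)`.  The graded connected bialgebra of rooted
trees admits an antipode `S`: a unital linear map which is a two-sided convolution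
inverse of the identity; on a tree `t` (where the counit vanishes) this says
`0 = m((id ⊗ S)(Δ t)) = t + S(t) + Σ_{c proper admissible cut} P_c(t)·S(R_c(t))`,
i.e. `S` satisfies the recursion
`S(t) = -t - Σ_{c proper admissible cut} P_c(t)·S(R_c(t))`. -/
theorem rootedTree_antipode_exists
    (T : Type) (B : Multiset T → T) (hB : Function.Bijective B)
    (hind : ∀ P : T → Prop,
      (∀ F : Multiset T, (∀ s ∈ F, P s) → P (B F)) → ∀ t, P t)
    (Bp : Hrt T →ₗ[ℚ] Hrt T) (hBp : ∀ F : Multiset T, Bp (frt F) = tre (B F))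
    (Δ : Hrt T →ₐ[ℚ] Hrt T ⊗[ℚ] Hrt T)
    (hΔ : ∀ F : Multiset T,
      Δ (tre (B F)) = tre (B F) ⊗ₜ[ℚ] 1 + (LinearMap.lTensor (Hrt T) Bp) (Δ (frt F))) :
    ∃ S : Hrt T →ₗ[ℚ] Hrt T, S 1 = 1 ∧
      ∀ t : T,
        (LinearMap.mul' ℚ (Hrt T)) ((LinearMap.lTensor (Hrt T) S) (Δ (tre t))) = 0 ∧
        (LinearMap.mul' ℚ (Hrt T)) ((LinearMap.rTensor (Hrt T) S) (Δ (tre t))) = 0 := by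
  open RootedTree in
  obtain ⟨deg, hdeg⟩ := exists_deg_graft hB hind
  obtain ⟨S, hS⟩ := exists_algHom_mul'_lTensor_eq_zero deg _
    (comul_sub_mem_rightDegLT hBp hΔ hind hdeg)
  obtain ⟨S', hS'⟩ := exists_algHom_mul'_lTensor_eq_zero deg _
    (comm_comul_sub_mem_rightDegLT hind hΔ hdeg)
  simp only [← mul'_rTensor_eq_mul'_lTensor_comm] at hS'
  obtain rfl := eq_of_mul'_lTensor_comul_of_mul'_rTensor_comul hBp hΔ hind hB.2 hS hS'
  exact ⟨S.toLinearMap, map_one S, fun t => ⟨hS t, hS' t⟩⟩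
end
end

section
/- For the natural growth operator N on the rooted tree Hopf algebra (which adds one new leaf to each vertex of a tree in all possible ways and sums the results), and for a solution x' = f(x) with associated elementary differential map φ, one has φ(N(t)) = d/ds φ(t) along the solution, for every rooted tree t. -/
noncomputable section

lemma erase_cons_of_mem' {T : Type} [DecidableEq T] {a s : T} {G : Multiset T} (hs : s ∈ G) :
    (a ::ₘ G).erase s = a ::ₘ G.erase s := by
  by_cases h : s = a
  · subst h
    rw [Multiset.erase_cons_head, Multiset.cons_erase hs]
  · rw [Multiset.erase_cons_tail _ (fun hh => h hh.symm)]

lemma multiset_prod_hasDerivAt {T : Type} [DecidableEq T] (g : T → ℝ → ℝ) (d : T → ℝ) (y : ℝ) :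
    ∀ (G : Multiset T), (∀ s ∈ G, HasDerivAt (g s) (d s) y) →
    HasDerivAt (fun σ => (G.map fun s => g s σ).prod)
      ((G.map fun s => d s * ((G.erase s).map fun s' => g s' y).prod).sum) y := by
  intro G
  induction G using Multiset.induction with
  | empty => intro _; simpa using hasDerivAt_const y (1:ℝ)
  | cons a G ih =>
    intro h
    have ha := h a (Multiset.mem_cons_self a G)
    have hG := ih (fun s hs => h s (Multiset.mem_cons_of_mem hs))
    have hmul := ha.mul hG
    have hfun : (fun σ => ((a ::ₘ G).map fun s => g s σ).prod)
        = fun σ => g a σ * ((G.map fun s => g s σ).prod) := by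
      funext σ; simp [Multiset.map_cons, Multiset.prod_cons]
    rw [hfun]
    refine hmul.congr_deriv ?_
    symm
    rw [Multiset.map_cons, Multiset.sum_cons, Multiset.erase_cons_head]
    congr 1
    rw [Multiset.map_congr rfl (fun s hs => by
      rw [erase_cons_of_mem' hs, Multiset.map_cons, Multiset.prod_cons,
        mul_left_comm (d s) (g a y)])]
    exact Multiset.sum_map_mul_left

lemma finsupp_multiset_sum {T : Type} (g : T → ℚ → ℝ)
    (h0 : ∀ a, g a 0 = 0) (hadd : ∀ a b c, g a (b + c) = g a b + g a c)
    (S : Multiset (T →₀ ℚ)) :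
    S.sum.sum g = (S.map fun p => p.sum g).sum := by
  induction S using Multiset.induction with
  | empty => simp
  | cons p S ih =>
    rw [Multiset.sum_cons, Finsupp.sum_add_index' h0 hadd, Multiset.map_cons,
      Multiset.sum_cons, ih]

/-- **Natural growth corresponds to differentiation along the solution.**
`T` is the type of rooted trees: `B = B₊` is the grafting bijection from forests
(multisets of trees) to trees, with its induction principle.  Given the ODE
`x'(s) = f(x(s))` with `f` smooth, `φ t` is the elementary differential of the tree
`t`: `φ(•) = f` and `φ(B₊(t₁,…,tₖ)) = f⁽ᵏ⁾ · φ(t₁)⋯φ(tₖ)` (one-dimensional case).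
`N t : T →₀ ℚ` is the natural growth of `t`: the formal sum, over the vertices `v` of
`t`, of the trees obtained by attaching a new leaf `• = B₊(∅)` at `v`; recursively,
`N(B₊ F) = B₊(• ::ₘ F) + Σ_{s ∈ F} B₊((F - s) + N(s))`.  Then for every rooted tree
`t`, `φ(N(t)) = d/ds φ(t)` along the solution. -/
theorem naturalGrowth_deriv
    (T : Type) [DecidableEq T] (B : Multiset T → T) (hB : Function.Bijective B)
    (hind : ∀ P : T → Prop,
      (∀ F : Multiset T, (∀ s ∈ F, P s) → P (B F)) → ∀ t, P t)
    (f x : ℝ → ℝ) (hf : ContDiff ℝ (⊤ : ℕ∞) f) (hx : ContDiff ℝ (⊤ : ℕ∞) x)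
    (hode : ∀ s, deriv x s = f (x s))
    (φ : T → ℝ → ℝ)
    (hφ : ∀ (F : Multiset T) (u : ℝ),
      φ (B F) u = iteratedDeriv (Multiset.card F) f u * ((F.map fun s => φ s u).prod))
    (N : T → (T →₀ ℚ))
    (hN : ∀ F : Multiset T,
      N (B F) = Finsupp.single (B ((B 0) ::ₘ F)) 1
        + (F.map fun s =>
            (N s).sum fun s' c => Finsupp.single (B (s' ::ₘ F.erase s)) c).sum) :
    ∀ (t : T) (s : ℝ),
      deriv (fun σ => φ t (x σ)) s = (N t).sum fun t' c => (c : ℝ) * φ t' (x s) := by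
  have h0 : ∀ (y : ℝ) (a : T), ((0 : ℚ) : ℝ) * φ a (x y) = 0 := by intro y a; simp
  have key : ∀ t : T, ∀ s : ℝ,
      HasDerivAt (fun σ => φ t (x σ)) ((N t).sum fun t' c => (c : ℝ) * φ t' (x s)) s := by
    refine hind _ ?_
    intro F IH s
    set k := Multiset.card F with hk
    set A : ℝ := iteratedDeriv k f (x s) with hA
    set d : T → ℝ := fun s' => (N s').sum fun t' c => (c : ℝ) * φ t' (x s) with hd
    set P : ℝ := (F.map fun u => φ u (x s)).prod with hP
    -- derivative of x
    have hxd : HasDerivAt x (f (x s)) s := by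
      have := ((hx.differentiable (by simp)) s).hasDerivAt
      rwa [hode] at this
    -- derivative of iterated derivative composed with x
    have hiter : HasDerivAt (iteratedDeriv k f) (iteratedDeriv (k + 1) f (x s)) (x s) := by
      have hdiff := hf.differentiable_iteratedDeriv k (by exact_mod_cast ENat.coe_lt_top k)
      have := (hdiff (x s)).hasDerivAt
      rwa [← iteratedDeriv_succ] at this
    have h1 : HasDerivAt (fun σ => iteratedDeriv k f (x σ))
        (iteratedDeriv (k + 1) f (x s) * f (x s)) s := hiter.comp s hxd
    have h2 := multiset_prod_hasDerivAt (fun s' σ => φ s' (x σ)) d s F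
      (fun s' hs' => IH s' hs' s)
    have hmul := h1.mul h2
    have hfun : (fun σ => φ (B F) (x σ))
        = fun σ => iteratedDeriv k f (x σ) * ((F.map fun u => φ u (x σ)).prod) := by
      funext σ; exact hφ F (x σ)
    rw [hfun]
    refine hmul.congr_deriv ?_
    symm
    -- now pure algebra: compute the Finsupp sum of N (B F)
    have hg0 : ∀ a : T, ((0 : ℚ) : ℝ) * φ a (x s) = 0 := h0 s
    have hgadd : ∀ (a : T) (b c : ℚ), ((b + c : ℚ) : ℝ) * φ a (x s)
        = (b : ℝ) * φ a (x s) + (c : ℝ) * φ a (x s) := by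
      intro a b c; push_cast; ring
    rw [hN F, Finsupp.sum_add_index' hg0 hgadd]
    -- first summand
    have hone : (Finsupp.single (B ((B 0) ::ₘ F)) (1 : ℚ)).sum
        (fun t' c => (c : ℝ) * φ t' (x s))
        = iteratedDeriv (k + 1) f (x s) * f (x s) * P := by
      rw [Finsupp.sum_single_index (hg0 _)]
      rw [hφ ((B 0) ::ₘ F) (x s), Multiset.card_cons, Multiset.map_cons,
        Multiset.prod_cons, hφ 0 (x s)]
      simp only [Multiset.card_zero, Multiset.map_zero, Multiset.prod_zero,
        iteratedDeriv_zero]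
      rw [← hk, ← hP]
      push_cast
      ring
    rw [hone]
    -- second summand
    rw [finsupp_multiset_sum _ hg0 hgadd, Multiset.map_map]
    have hmapeq : Multiset.map
        ((fun p : T →₀ ℚ => p.sum fun t' c => (c : ℝ) * φ t' (x s)) ∘
          fun s' => (N s').sum fun s'' c => Finsupp.single (B (s'' ::ₘ F.erase s')) c) F
        = Multiset.map (fun s' => A * (d s' *
            (((F.erase s').map fun u => φ u (x s)).prod))) F := by
      refine Multiset.map_congr rfl ?_
      intro s' hs'
      simp only [Function.comp]
      rw [Finsupp.sum_sum_index hg0 hgadd]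
      have hcard : Multiset.card (F.erase s') + 1 = k := by
        rw [Multiset.card_erase_of_mem hs']
        exact Nat.succ_pred_eq_of_pos (Multiset.card_pos_iff_exists_mem.2 ⟨s', hs'⟩)
      have hterm : ∀ s'' : T, ∀ c : ℚ,
          (Finsupp.single (B (s'' ::ₘ F.erase s')) c).sum
            (fun t' c => (c : ℝ) * φ t' (x s))
          = (A * (((F.erase s').map fun u => φ u (x s)).prod)) *
              ((c : ℝ) * φ s'' (x s)) := by
        intro s'' c
        rw [Finsupp.sum_single_index (hg0 _), hφ (s'' ::ₘ F.erase s') (x s),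
          Multiset.card_cons, hcard, Multiset.map_cons, Multiset.prod_cons, ← hA]
        ring
      have hcg : ((N s').sum fun a b => (Finsupp.single (B (a ::ₘ F.erase s')) b).sum
            fun t' c => (c : ℝ) * φ t' (x s))
          = (N s').sum fun a b =>
            (A * (((F.erase s').map fun u => φ u (x s)).prod)) * ((b : ℝ) * φ a (x s)) :=
        Finsupp.sum_congr fun a _ => hterm a _
      have hds : ((N s').sum fun t' c => (c : ℝ) * φ t' (x s)) = d s' := rfl
      rw [hcg, ← Finsupp.mul_sum, hds]
      ring
    rw [hmapeq, Multiset.sum_map_mul_left]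
  intro t s
  exact (key t s).deriv
end
end

section
/- The generalized natural growth operator N_t satisfies the coproduct formula Δ(N_t(s)) = (N_t ⊗ id)(Δ s) + Σ_{c admissible cut of t} (m_{P_c(t)} ⊗ N_{R_c(t)})(Δ s), where m_{P_c(t)} denotes multiplication by the pruned forest P_c(t). -/
/-!
Put `D = N_t ⊗ id + Σ_c m_{P_c(t)} ⊗ N_{R_c(t)}`. Both `Δ ∘ N_t` and `D ∘ Δ` are derivations
along the algebra map `Δ`, so they agree on `H_rt` once they agree on trees, which is shown by
induction on `s = B₊ F`. The grafting identities `N_r ∘ B₊ = B₊ ∘ (m_r + N_r)` and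
`N_1 ∘ B₊ = B₊ ∘ (id + N_1)`, summed against `Δ t = Σ_c P_c(t) ⊗ R_c(t)`, give
`D ∘ (id ⊗ B₊) = (id ⊗ B₊) ∘ (m_{Δ t} + D)`. Together with the cocycle identity
`Δ ∘ B₊ = B₊ ⊗ 1 + (id ⊗ B₊) ∘ Δ`, this carries the identity from `F` to `B₊ F`.
-/

open TensorProduct

noncomputable section

section Leibniz

variable {R A : Type*} [CommSemiring R] [Semiring A] [Algebra R A]

def IsLeibniz (f : A →ₗ[R] A) : Prop := ∀ a b : A, f (a * b) = f a * b + a * f b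

namespace IsLeibniz

variable {f g : A →ₗ[R] A}

theorem map_one [IsLeftCancelAdd A] (hf : IsLeibniz f) : f 1 = 0 := by
  simpa using hf 1 1

theorem add (hf : IsLeibniz f) (hg : IsLeibniz g) : IsLeibniz (f + g) := by
  intro a b
  simp only [LinearMap.add_apply, hf a b, hg a b, add_mul, mul_add]
  abel

theorem zero : IsLeibniz (0 : A →ₗ[R] A) := by
  intro a b
  simp

theorem sum {ι : Type*} (s : Finset ι) {f : ι → A →ₗ[R] A} (hf : ∀ i ∈ s, IsLeibniz (f i)) :
    IsLeibniz (∑ i ∈ s, f i) := by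
  classical
  induction s using Finset.induction_on with
  | empty => simpa using zero
  | insert i s hi ih =>
    rw [Finset.sum_insert hi]
    exact (hf i (s.mem_insert_self i)).add (ih fun j hj => hf j (Finset.mem_insert_of_mem hj))

theorem of_span {s : Set A} (hs : Submodule.span R s = ⊤)
    (h : ∀ a ∈ s, ∀ b ∈ s, f (a * b) = f a * b + a * f b) : IsLeibniz f := by
  have mem_top : ∀ x : A, x ∈ Submodule.span R s := fun x => hs ▸ Submodule.mem_top
  have right : ∀ a ∈ s, ∀ b : A, f (a * b) = f a * b + a * f b := by
    intro a ha b
    induction mem_top b using Submodule.span_induction with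
    | mem b hb => exact h a ha b hb
    | zero => simp
    | add x y _ _ hx hy => simp only [mul_add, map_add, hx, hy]; abel
    | smul r x _ hx => simp only [mul_smul_comm, map_smul, hx, smul_add]
  intro a b
  induction mem_top a using Submodule.span_induction with
  | mem a ha => exact right a ha b
  | zero => simp
  | add x y _ _ hx hy => simp only [add_mul, map_add, hx, hy]; abel
  | smul r x _ hx => simp only [smul_mul_assoc, map_smul, hx, smul_add]

end IsLeibniz

end Leibniz

section TensorLeibniz

variable {R A B : Type*} [CommSemiring R]

theorem IsLeibniz.rTensor [Semiring A] [Algebra R A] [Semiring B] [Algebra R B]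
    {f : A →ₗ[R] A} (hf : IsLeibniz f) : IsLeibniz (f.rTensor B) :=
  IsLeibniz.of_span (TensorProduct.span_tmul_eq_top R A B) <| by
    rintro _ ⟨a, b, rfl⟩ _ ⟨a', b', rfl⟩
    simp [Algebra.TensorProduct.tmul_mul_tmul, hf a a', add_tmul]

theorem IsLeibniz.map_mulLeft [CommSemiring A] [Algebra R A] [Semiring B] [Algebra R B]
    (P : A) {g : B →ₗ[R] B} (hg : IsLeibniz g) :
    IsLeibniz (TensorProduct.map (LinearMap.mulLeft R P) g) :=
  IsLeibniz.of_span (TensorProduct.span_tmul_eq_top R A B) <| by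
    rintro _ ⟨a, b, rfl⟩ _ ⟨a', b', rfl⟩
    simp only [Algebra.TensorProduct.tmul_mul_tmul, map_tmul, LinearMap.mulLeft_apply, hg b b',
      tmul_add]
    congr 2 <;> ring

end TensorLeibniz

section CutGrowth

variable {R A C : Type*} [CommSemiring R] [CommSemiring A] [Algebra R A] [Fintype C]
  (N : A →ₗ[R] A) (P : C → A) (G : C → A →ₗ[R] A)

def cutGrowthOp : A ⊗[R] A →ₗ[R] A ⊗[R] A :=
  N.rTensor A + ∑ c, TensorProduct.map (LinearMap.mulLeft R (P c)) (G c)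

theorem cutGrowthOp_apply (w : A ⊗[R] A) :
    cutGrowthOp N P G w
      = N.rTensor A w + ∑ c, TensorProduct.map (LinearMap.mulLeft R (P c)) (G c) w := by
  simp [cutGrowthOp, LinearMap.sum_apply]

variable {N G}

theorem isLeibniz_cutGrowthOp (hN : IsLeibniz N) (hG : ∀ c, IsLeibniz (G c)) :
    IsLeibniz (cutGrowthOp N P G) :=
  hN.rTensor.add (IsLeibniz.sum _ fun c _ => (hG c).map_mulLeft (P c))

theorem cutGrowthOp_tmul_one (hG : ∀ c, G c 1 = 0) (x : A) :
    cutGrowthOp N P G (x ⊗ₜ 1) = N x ⊗ₜ 1 := by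
  simp [cutGrowthOp_apply, hG]

theorem cutGrowthOp_lTensor (Bp : A →ₗ[R] A) (g : C → A)
    (hG : ∀ c b, G c (Bp b) = Bp (g c * b) + Bp (G c b)) (w : A ⊗[R] A) :
    cutGrowthOp N P G (Bp.lTensor A w)
      = Bp.lTensor A ((∑ c, P c ⊗ₜ g c) * w + cutGrowthOp N P G w) := by
  suffices cutGrowthOp N P G ∘ₗ Bp.lTensor A
      = Bp.lTensor A ∘ₗ (LinearMap.mulLeft R (∑ c, P c ⊗ₜ g c) + cutGrowthOp N P G) from
    LinearMap.congr_fun this w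
  ext a b
  simp only [AlgebraTensorModule.curry_apply, LinearMap.restrictScalars_self, curry_apply,
    LinearMap.coe_comp, Function.comp_apply, LinearMap.lTensor_tmul, cutGrowthOp_apply,
    LinearMap.rTensor_tmul, map_tmul, LinearMap.mulLeft_apply, hG, tmul_add,
    Finset.sum_add_distrib, LinearMap.add_apply, Finset.sum_mul,
    Algebra.TensorProduct.tmul_mul_tmul, map_add, map_sum]
  abel

end CutGrowth

section Intertwine

variable {R A B : Type*} [CommSemiring R]

namespace IsLeibniz

theorem map_multiset_prod_map {T : Type*} [DecidableEq T] [CommSemiring A] [Algebra R A]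
    [IsLeftCancelAdd A] {f : A →ₗ[R] A} (hf : IsLeibniz f) (φ : T → A) (F : Multiset T) :
    f (F.map φ).prod = (F.map fun u => ((F.erase u).map φ).prod * f (φ u)).sum := by
  induction F using Multiset.induction_on with
  | empty => simp [hf.map_one]
  | cons u F ih =>
    have tail : (F.map fun v => ((u ::ₘ F).erase v |>.map φ).prod * f (φ v))
        = F.map fun v => φ u * (((F.erase v).map φ).prod * f (φ v)) :=
      Multiset.map_congr rfl fun v hv => by
        rw [Multiset.erase_cons_tail_of_mem hv, Multiset.map_cons, Multiset.prod_cons, mul_assoc]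
    rw [Multiset.map_cons, Multiset.prod_cons, hf, ih, Multiset.map_cons, Multiset.sum_cons,
      Multiset.erase_cons_head, tail, Multiset.sum_map_mul_left, mul_comm (f (φ u))]

theorem intertwine_mul [Semiring A] [Algebra R A] [Semiring B] [Algebra R B]
    {f : A →ₗ[R] A} {D : B →ₗ[R] B}
    (hf : IsLeibniz f) (hD : IsLeibniz D) (φ : A →ₐ[R] B) {a b : A}
    (ha : φ (f a) = D (φ a)) (hb : φ (f b) = D (φ b)) : φ (f (a * b)) = D (φ (a * b)) := by
  rw [hf, map_add, map_mul, map_mul, ha, hb, map_mul, hD]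

theorem intertwine_multiset_prod [CommSemiring A] [Algebra R A] [IsLeftCancelAdd A]
    [Semiring B] [Algebra R B] [IsLeftCancelAdd B] {f : A →ₗ[R] A} {D : B →ₗ[R] B}
    (hf : IsLeibniz f) (hD : IsLeibniz D) (φ : A →ₐ[R] B) (m : Multiset A)
    (hm : ∀ a ∈ m, φ (f a) = D (φ a)) : φ (f m.prod) = D (φ m.prod) :=
  Multiset.prod_induction (fun a => φ (f a) = D (φ a)) m
    (fun _ _ => intertwine_mul hf hD φ) (by simp [hf.map_one, hD.map_one]) hm

end IsLeibniz

end Intertwine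

theorem intertwine_Bp {R A : Type*} [CommSemiring R] [Semiring A] [Algebra R A]
    (Δ : A →ₐ[R] A ⊗[R] A) (Bp N : A →ₗ[R] A) (D : A ⊗[R] A →ₗ[R] A ⊗[R] A) (g : A)
    (hΔBp : ∀ x, Δ (Bp x) = Bp x ⊗ₜ 1 + Bp.lTensor A (Δ x))
    (hNBp : ∀ x, N (Bp x) = Bp (g * x) + Bp (N x))
    (hD_tmul_one : ∀ x, D (x ⊗ₜ 1) = N x ⊗ₜ 1)
    (hD_lTensor : ∀ w, D (Bp.lTensor A w) = Bp.lTensor A (Δ g * w + D w))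
    {x : A} (hx : Δ (N x) = D (Δ x)) : Δ (N (Bp x)) = D (Δ (Bp x)) := by
  calc Δ (N (Bp x))
      = Bp (g * x + N x) ⊗ₜ 1 + Bp.lTensor A (Δ g * Δ x + D (Δ x)) := by
        rw [hNBp, ← map_add, hΔBp, map_add Δ, map_mul Δ, hx]
    _ = D (Δ (Bp x)) := by
        rw [hΔBp, map_add D, hD_tmul_one, hD_lTensor, hNBp, map_add]

section RootedTrees

variable {T : Type}

theorem frt_mul (F G : Multiset T) : frt F * frt G = frt (F + G) := by
  simp [frt, AddMonoidAlgebra.single_mul_single]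

theorem frt_eq_prod (F : Multiset T) : frt F = (F.map tre).prod := by
  induction F using Multiset.induction_on with
  | empty => rfl
  | cons u F ih => rw [Multiset.map_cons, Multiset.prod_cons, ← ih, tre, frt_mul]; rfl

theorem tre_mul_frt (t : T) (F : Multiset T) : tre t * frt F = frt (t ::ₘ F) :=
  frt_mul {t} F

theorem span_range_frt : Submodule.span ℚ (Set.range (frt : Multiset T → Hrt T)) = ⊤ := by
  have : ⇑(AddMonoidAlgebra.basis (Multiset T) ℚ) = frt :=
    funext fun F => AddMonoidAlgebra.basis_apply ℚ F
  exact this ▸ (AddMonoidAlgebra.basis (Multiset T) ℚ).span_eq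

theorem Hrt.lhom_ext {M : Type*} [AddCommMonoid M] [Module ℚ M] {f g : Hrt T →ₗ[ℚ] M}
    (h : ∀ F, f (frt F) = g (frt F)) : f = g :=
  LinearMap.ext_on_range span_range_frt h

theorem isLeibniz_grading (vert : T → ℕ) {Y : Hrt T →ₗ[ℚ] Hrt T}
    (hY : ∀ F : Multiset T, Y (frt F) = ((F.map vert).sum : ℚ) • frt F) : IsLeibniz Y := by
  refine IsLeibniz.of_span span_range_frt ?_
  rintro _ ⟨F, rfl⟩ _ ⟨G, rfl⟩
  rw [frt_mul, hY, hY, hY, smul_mul_assoc, mul_smul_comm, frt_mul, ← add_smul,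
    Multiset.map_add, Multiset.sum_add, Nat.cast_add]

variable {B : Multiset T → T} {Bp : Hrt T →ₗ[ℚ] Hrt T} (hBp : ∀ F, Bp (frt F) = tre (B F))
include hBp

theorem grading_Bp {vert : T → ℕ} (hvert : ∀ F, vert (B F) = 1 + (F.map vert).sum)
    {Y : Hrt T →ₗ[ℚ] Hrt T}
    (hY : ∀ F : Multiset T, Y (frt F) = ((F.map vert).sum : ℚ) • frt F) (b : Hrt T) :
    Y (Bp b) = Bp b + Bp (Y b) := by
  suffices Y ∘ₗ Bp = Bp + Bp ∘ₗ Y from LinearMap.congr_fun this b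
  refine Hrt.lhom_ext fun F => ?_
  simp only [LinearMap.comp_apply, LinearMap.add_apply, hBp, tre, hY, map_smul]
  simp [hvert, add_smul]

theorem naturalGrowth_Bp [DecidableEq T] {N : Hrt T →ₗ[ℚ] Hrt T} (hN : IsLeibniz N) {r : T}
    (hNtree : ∀ F : Multiset T, N (tre (B F)) = tre (B (r ::ₘ F))
      + (F.map fun s => Bp (frt (F.erase s) * N (tre s))).sum) (b : Hrt T) :
    N (Bp b) = Bp (tre r * b) + Bp (N b) := by
  suffices N ∘ₗ Bp = Bp ∘ₗ LinearMap.mulLeft ℚ (tre r) + Bp ∘ₗ N from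
    LinearMap.congr_fun this b
  refine Hrt.lhom_ext fun F => ?_
  simp only [LinearMap.comp_apply, LinearMap.add_apply, LinearMap.mulLeft_apply]
  rw [hBp, hNtree, tre_mul_frt, hBp, frt_eq_prod F, hN.map_multiset_prod_map, map_multiset_sum,
    Multiset.map_map]
  simp only [Function.comp_def, frt_eq_prod]

theorem coproduct_Bp {Δ : Hrt T →ₗ[ℚ] Hrt T ⊗[ℚ] Hrt T}
    (hΔ : ∀ F, Δ (tre (B F)) = tre (B F) ⊗ₜ[ℚ] 1 + Bp.lTensor (Hrt T) (Δ (frt F)))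
    (x : Hrt T) :
    Δ (Bp x) = Bp x ⊗ₜ[ℚ] 1 + Bp.lTensor (Hrt T) (Δ x) := by
  suffices Δ ∘ₗ Bp = (TensorProduct.mk ℚ (Hrt T) (Hrt T)).flip 1 ∘ₗ Bp
      + Bp.lTensor (Hrt T) ∘ₗ Δ from LinearMap.congr_fun this x
  refine Hrt.lhom_ext fun F => ?_
  simp [hBp, hΔ]

end RootedTrees

/-- `B` grafts a forest onto a new root and `Bp` is its linear extension `B₊`; `Y = N_1` counts
vertices. The admissible cuts `c : C` of `t` have pruned forest `Pc c` and root part `Rc c`, which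
is `none` for the total cut: there `R_c(t) = 1` and `N_{R_c(t)}` is read as `Y`. -/
theorem coproduct_naturalGrowth_general
    (T : Type) [DecidableEq T] (B : Multiset T → T)
    (hind : ∀ P : T → Prop,
      (∀ F : Multiset T, (∀ s ∈ F, P s) → P (B F)) → ∀ t, P t)
    (vert : T → ℕ) (hvert : ∀ F : Multiset T, vert (B F) = 1 + (F.map vert).sum)
    (Bp : Hrt T →ₗ[ℚ] Hrt T) (hBp : ∀ F : Multiset T, Bp (frt F) = tre (B F))
    (Δ : Hrt T →ₐ[ℚ] Hrt T ⊗[ℚ] Hrt T)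
    (hΔ : ∀ F : Multiset T,
      Δ (tre (B F)) = tre (B F) ⊗ₜ[ℚ] 1 + (LinearMap.lTensor (Hrt T) Bp) (Δ (frt F)))
    (Ng : T → Hrt T →ₗ[ℚ] Hrt T)
    (hNder : ∀ (t : T) (a b : Hrt T), Ng t (a * b) = Ng t a * b + a * Ng t b)
    (hNtree : ∀ (t : T) (F : Multiset T),
      Ng t (tre (B F)) = tre (B (t ::ₘ F))
        + (F.map (fun s => Bp (frt (F.erase s) * Ng t (tre s)))).sum)
    (Y : Hrt T →ₗ[ℚ] Hrt T)
    (hY : ∀ F : Multiset T, Y (frt F) = ((F.map vert).sum : ℚ) • frt F)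
    (t s : T)
    (C : Type) [Fintype C] (Pc : C → Multiset T) (Rc : C → Option T)
    (hcut : Δ (tre t) = ∑ c : C, frt (Pc c) ⊗ₜ[ℚ] ((Rc c).elim 1 tre)) :
    Δ (Ng t (tre s)) =
      (LinearMap.rTensor (Hrt T) (Ng t)) (Δ (tre s))
        + ∑ c : C,
            (TensorProduct.map (LinearMap.mulLeft ℚ (frt (Pc c))) ((Rc c).elim Y Ng))
              (Δ (tre s)) := by
  set D := cutGrowthOp (Ng t) (fun c => frt (Pc c)) (fun c => (Rc c).elim Y Ng)
  have hG : ∀ c, IsLeibniz ((Rc c).elim Y Ng) := fun c => by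
    cases Rc c
    exacts [isLeibniz_grading vert hY, hNder _]
  have hGBp : ∀ c b, (Rc c).elim Y Ng (Bp b)
      = Bp ((Rc c).elim 1 tre * b) + Bp ((Rc c).elim Y Ng b) := fun c b => by
    cases Rc c
    · simpa using grading_Bp hBp hvert hY b
    · exact naturalGrowth_Bp hBp (hNder _) (hNtree _) b
  have hD : IsLeibniz D := isLeibniz_cutGrowthOp _ (hNder t) hG
  refine Eq.trans ?_ (cutGrowthOp_apply _ _ _ _)
  refine hind (fun s => Δ (Ng t (tre s)) = D (Δ (tre s))) (fun F hF => ?_) s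
  have hforest : Δ (Ng t (frt F)) = D (Δ (frt F)) := by
    rw [frt_eq_prod]
    exact IsLeibniz.intertwine_multiset_prod (hNder t) hD Δ _ (by simpa using hF)
  rw [← hBp]
  refine intertwine_Bp Δ Bp (Ng t) D (tre t) (coproduct_Bp (Δ := Δ.toLinearMap) hBp hΔ)
    (naturalGrowth_Bp hBp (hNder t) (hNtree t)) (cutGrowthOp_tmul_one _ fun c => (hG c).map_one)
    ?_ hforest
  simpa only [← hcut] using cutGrowthOp_lTensor (fun c => frt (Pc c)) Bp _ hGBp

/-- **Coproduct of the generalized natural growth operator.**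
`T` is the type of rooted trees (with grafting bijection `B = B₊`, induction principle
and vertex count `vert`).  `Δ` is the admissible-cut coproduct, `Ng t = N_t` the
generalized natural growth operator, and `Y` the grading operator (`= N_1`).  The
admissible cuts of the tree `t` are presented by a finite type `C` with pruned forest
`Pc c` and root part `Rc c` (a tree, or `none` for the full cut where `R_c(t) = 1`),
so that `Δ t = Σ_c P_c(t) ⊗ R_c(t)`.  Then for trees `t, s`:
`Δ(N_t(s)) = (N_t ⊗ id)(Δ s) + Σ_{c admissible cut of t} (m_{P_c(t)} ⊗ N_{R_c(t)})(Δ s)`,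
where `m_{P_c(t)}` is multiplication by the forest `P_c(t)` and `N_{R_c(t)} = Y` when
`R_c(t) = 1`. -/
theorem coproduct_naturalGrowth
    (T : Type) [DecidableEq T] (B : Multiset T → T) (hB : Function.Bijective B)
    (hind : ∀ P : T → Prop,
      (∀ F : Multiset T, (∀ s ∈ F, P s) → P (B F)) → ∀ t, P t)
    (vert : T → ℕ) (hvert : ∀ F : Multiset T, vert (B F) = 1 + (F.map vert).sum)
    (Bp : Hrt T →ₗ[ℚ] Hrt T) (hBp : ∀ F : Multiset T, Bp (frt F) = tre (B F))
    (Δ : Hrt T →ₐ[ℚ] Hrt T ⊗[ℚ] Hrt T)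
    (hΔ : ∀ F : Multiset T,
      Δ (tre (B F)) = tre (B F) ⊗ₜ[ℚ] 1 + (LinearMap.lTensor (Hrt T) Bp) (Δ (frt F)))
    (Ng : T → Hrt T →ₗ[ℚ] Hrt T)
    (hNder : ∀ (t : T) (a b : Hrt T), Ng t (a * b) = Ng t a * b + a * Ng t b)
    (hNtree : ∀ (t : T) (F : Multiset T),
      Ng t (tre (B F)) = tre (B (t ::ₘ F))
        + (F.map (fun s => Bp (frt (F.erase s) * Ng t (tre s)))).sum)
    (Y : Hrt T →ₗ[ℚ] Hrt T)
    (hY : ∀ F : Multiset T, Y (frt F) = ((F.map vert).sum : ℚ) • frt F)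
    (t s : T)
    (C : Type) [Fintype C] (Pc : C → Multiset T) (Rc : C → Option T)
    (hcut : Δ (tre t) = ∑ c : C, frt (Pc c) ⊗ₜ[ℚ] ((Rc c).elim 1 tre)) :
    Δ (Ng t (tre s)) =
      (LinearMap.rTensor (Hrt T) (Ng t)) (Δ (tre s))
        + ∑ c : C,
            (TensorProduct.map (LinearMap.mulLeft ℚ (frt (Pc c))) ((Rc c).elim Y Ng))
              (Δ (tre s)) :=
  coproduct_naturalGrowth_general T B hind vert hvert Bp hBp Δ hΔ Ng hNder hNtree Y hY t s C Pc Rc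
    hcut

end
end

section
/- Every rooted tree can be written as a finite ℚ-linear combination of elements of the form N_{t_n}(⋯ N_{t_1}(•)⋯), where the t_i are rooted trees; hence the repeated application of generalized natural growth operators to the single-vertex tree generates the Hopf algebra of rooted trees. -/
open TensorProduct

noncomputable section

/-!
Write a tree as `B₊(t, F)`, with one branch `t` split off its root forest. Rearranging the
defining identity of `N_t` gives
`B₊(t, F) = N_t(B₊ F) - Σ_{s ∈ F} B₊((F - s) · N_t(s))`.
Each `N_t(s)` is a linear combination of trees `u`, and `B₊((F - s) · u) = B₊(u, F - s)` has a
root forest of the same size as `F`. So induction on the number of branches at the root puts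
every tree in the span of the iterated growths of `•`, a subspace stable under every `N_t`.
Trees generate `H_rt` as an algebra, whence the second claim.
-/

open Submodule

namespace NaturalGrowth

variable {T : Type}

theorem frt_cons (t : T) (F : Multiset T) : frt (t ::ₘ F) = tre t * frt F := by
  simp [frt, tre, AddMonoidAlgebra.single_mul_single, Multiset.singleton_add]

theorem frt_zero : frt (0 : Multiset T) = 1 := rfl

theorem span_range_frt : span ℚ (Set.range (frt : Multiset T → Hrt T)) = ⊤ :=
  (AddMonoidAlgebra.basis (Multiset T) ℚ).span_eq

theorem adjoin_range_tre : Algebra.adjoin ℚ (Set.range (tre : T → Hrt T)) = ⊤ := by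
  have hfrt (F : Multiset T) : frt F ∈ Algebra.adjoin ℚ (Set.range (tre : T → Hrt T)) := by
    induction F using Multiset.induction with
    | empty => exact frt_zero (T := T) ▸ one_mem _
    | cons t F ih => exact frt_cons t F ▸ mul_mem (Algebra.subset_adjoin ⟨t, rfl⟩) ih
  refine eq_top_iff.2 fun x _ => ?_
  have hx : x ∈ span ℚ (Set.range (frt : Multiset T → Hrt T)) := span_range_frt ▸ mem_top
  refine (span_le (p := Subalgebra.toSubmodule (Algebra.adjoin ℚ (Set.range tre)))).mpr ?_ hx
  rintro _ ⟨F, rfl⟩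
  exact hfrt F

theorem apply_mem_of_forall_frt_mem {M : Type} [AddCommMonoid M] [Module ℚ M]
    (f : Hrt T →ₗ[ℚ] M) {p : Submodule ℚ M} (h : ∀ F, f (frt F) ∈ p) (x : Hrt T) : f x ∈ p := by
  have hx : x ∈ span ℚ (Set.range (frt : Multiset T → Hrt T)) := span_range_frt ▸ mem_top
  refine (span_le (p := p.comap f)).mpr ?_ hx
  rintro _ ⟨F, rfl⟩
  exact h F

/-- The elements `N_{t_n}(⋯ N_{t_1}(x)⋯)`. -/
def growthOrbit (Ng : T → Hrt T →ₗ[ℚ] Hrt T) (x : Hrt T) : Set (Hrt T) :=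
  {y | ∃ L : List T, y = L.foldl (fun a u => Ng u a) x}

theorem self_mem_growthOrbit (Ng : T → Hrt T →ₗ[ℚ] Hrt T) (x : Hrt T) : x ∈ growthOrbit Ng x :=
  ⟨[], rfl⟩

theorem apply_mem_span_growthOrbit (Ng : T → Hrt T →ₗ[ℚ] Hrt T) (x : Hrt T) (t : T) {y : Hrt T}
    (hy : y ∈ span ℚ (growthOrbit Ng x)) : Ng t y ∈ span ℚ (growthOrbit Ng x) := by
  refine (span_le (p := (span ℚ (growthOrbit Ng x)).comap (Ng t))).mpr ?_ hy
  rintro _ ⟨L, rfl⟩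
  exact subset_span ⟨L ++ [t], by rw [List.foldl_append]; rfl⟩

variable {B : Multiset T → T} {Bp : Hrt T →ₗ[ℚ] Hrt T}

theorem Bp_mem_span_range_tre (hBp : ∀ F, Bp (frt F) = tre (B F)) (x : Hrt T) :
    Bp x ∈ span ℚ (Set.range (tre : T → Hrt T)) :=
  apply_mem_of_forall_frt_mem Bp (fun F => hBp F ▸ subset_span ⟨B F, rfl⟩) x

theorem Bp_frt_mul_mem (hBp : ∀ F, Bp (frt F) = tre (B F)) {M : Submodule ℚ (Hrt T)}
    {F : Multiset T} (hM : ∀ u, tre (B (u ::ₘ F)) ∈ M) {y : Hrt T}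
    (hy : y ∈ span ℚ (Set.range (tre : T → Hrt T))) : Bp (frt F * y) ∈ M := by
  refine (span_le (p := M.comap (Bp ∘ₗ LinearMap.mulLeft ℚ (frt F)))).mpr ?_ hy
  rintro _ ⟨u, rfl⟩
  change Bp (frt F * tre u) ∈ M
  rw [mul_comm, ← frt_cons, hBp]
  exact hM u

variable [DecidableEq T] {Ng : T → Hrt T →ₗ[ℚ] Hrt T}
  (hNtree : ∀ (t : T) (F : Multiset T), Ng t (tre (B F)) = tre (B (t ::ₘ F))
    + (F.map (fun s => Bp (frt (F.erase s) * Ng t (tre s)))).sum)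
include hNtree

theorem Ng_tre_mem_span_range_tre (hB : Function.Surjective B)
    (hBp : ∀ F, Bp (frt F) = tre (B F)) (t s : T) :
    Ng t (tre s) ∈ span ℚ (Set.range (tre : T → Hrt T)) := by
  obtain ⟨F, rfl⟩ := hB s
  rw [hNtree]
  refine add_mem (subset_span ⟨_, rfl⟩) (multiset_sum_mem _ ?_)
  intro x hx
  obtain ⟨u, -, rfl⟩ := Multiset.mem_map.mp hx
  exact Bp_mem_span_range_tre hBp _

theorem tre_B_cons_mem (hB : Function.Surjective B) (hBp : ∀ F, Bp (frt F) = tre (B F))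
    {M : Submodule ℚ (Hrt T)} (hM : ∀ t, ∀ y ∈ M, Ng t y ∈ M) {t : T} {F : Multiset T}
    (ih : ∀ G : Multiset T, G.card = F.card → tre (B G) ∈ M) : tre (B (t ::ₘ F)) ∈ M := by
  rw [eq_sub_of_add_eq (hNtree t F).symm]
  refine sub_mem (hM t _ (ih F rfl)) (multiset_sum_mem _ fun x hx => ?_)
  obtain ⟨s, hs, rfl⟩ := Multiset.mem_map.mp hx
  refine Bp_frt_mul_mem hBp (fun u => ih _ ?_) (Ng_tre_mem_span_range_tre hNtree hB hBp t s)
  rw [Multiset.card_cons, Multiset.card_erase_add_one hs]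

theorem tre_B_mem_of_card_eq (hB : Function.Surjective B) (hBp : ∀ F, Bp (frt F) = tre (B F))
    {M : Submodule ℚ (Hrt T)} (hM : ∀ t, ∀ y ∈ M, Ng t y ∈ M) (h0 : tre (B 0) ∈ M) (n : ℕ) :
    ∀ F : Multiset T, F.card = n → tre (B F) ∈ M := by
  induction n with
  | zero =>
    intro F hF
    rwa [Multiset.card_eq_zero.mp hF]
  | succ n ih =>
    intro F hF
    obtain ⟨t, G, rfl, hG⟩ := Multiset.card_eq_succ_iff.mp hF
    exact tre_B_cons_mem hNtree hB hBp hM fun G' hG' => ih G' (hG'.trans hG)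

theorem tre_mem_of_stable (hB : Function.Surjective B) (hBp : ∀ F, Bp (frt F) = tre (B F))
    {M : Submodule ℚ (Hrt T)} (hM : ∀ t, ∀ y ∈ M, Ng t y ∈ M) (h0 : tre (B 0) ∈ M) (t : T) :
    tre t ∈ M := by
  obtain ⟨F, rfl⟩ := hB t
  exact tre_B_mem_of_card_eq hNtree hB hBp hM h0 _ F rfl

end NaturalGrowth

open NaturalGrowth in
theorem naturalGrowth_generates_general
    (T : Type) [DecidableEq T] (B : Multiset T → T) (hB : Function.Bijective B)
    (Bp : Hrt T →ₗ[ℚ] Hrt T) (hBp : ∀ F : Multiset T, Bp (frt F) = tre (B F))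
    (Ng : T → Hrt T →ₗ[ℚ] Hrt T)
    (hNtree : ∀ (t : T) (F : Multiset T),
      Ng t (tre (B F)) = tre (B (t ::ₘ F))
        + (F.map (fun s => Bp (frt (F.erase s) * Ng t (tre s)))).sum) :
    (∀ t : T, tre t ∈ Submodule.span ℚ
        {x : Hrt T | ∃ L : List T, x = L.foldl (fun a u => Ng u a) (tre (B 0))}) ∧
      Algebra.adjoin ℚ
        {x : Hrt T | ∃ L : List T, x = L.foldl (fun a u => Ng u a) (tre (B 0))} = ⊤ := by
  have htre (t : T) : tre t ∈ span ℚ (growthOrbit Ng (tre (B 0))) :=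
    tre_mem_of_stable hNtree hB.2 hBp (fun t _ => apply_mem_span_growthOrbit Ng _ t)
      (subset_span (self_mem_growthOrbit Ng _)) t
  refine ⟨htre, eq_top_iff.2 ?_⟩
  rw [← adjoin_range_tre, Algebra.adjoin_le_iff]
  rintro _ ⟨t, rfl⟩
  exact Algebra.span_le_adjoin ℚ _ (htre t)

/-- **Generalized natural growth generates the Hopf algebra of rooted trees.**
`T` is the type of rooted trees (with grafting bijection `B = B₊` and induction
principle).  For each tree `t`, `Ng t` is the generalized natural growth operator
`N_t` on `Hrt T`: on a tree `s = B₊(F)` it is the sum over vertices of `s` of the tree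
obtained by attaching a copy of `t` there, i.e.
`N_t(B₊ F) = B₊(t ::ₘ F) + Σ_{s' ∈ F} B₊((F - s') + N_t(s'))`, and it is extended to
products of trees by the Leibniz rule.  Then every rooted tree is a finite `ℚ`-linear
combination of elements `N_{t_n}(⋯ N_{t_1}(•)⋯)` (where `• = B₊(∅)` is the
single-vertex tree); hence these elements generate `Hrt T` as a `ℚ`-algebra. -/
theorem naturalGrowth_generates
    (T : Type) [DecidableEq T] (B : Multiset T → T) (hB : Function.Bijective B)
    (hind : ∀ P : T → Prop,
      (∀ F : Multiset T, (∀ s ∈ F, P s) → P (B F)) → ∀ t, P t)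
    (Bp : Hrt T →ₗ[ℚ] Hrt T) (hBp : ∀ F : Multiset T, Bp (frt F) = tre (B F))
    (Ng : T → Hrt T →ₗ[ℚ] Hrt T)
    (hNder : ∀ (t : T) (a b : Hrt T), Ng t (a * b) = Ng t a * b + a * Ng t b)
    (hNtree : ∀ (t : T) (F : Multiset T),
      Ng t (tre (B F)) = tre (B (t ::ₘ F))
        + (F.map (fun s => Bp (frt (F.erase s) * Ng t (tre s)))).sum) :
    (∀ t : T, tre t ∈ Submodule.span ℚ
        {x : Hrt T | ∃ L : List T, x = L.foldl (fun a u => Ng u a) (tre (B 0))}) ∧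
      Algebra.adjoin ℚ
        {x : Hrt T | ∃ L : List T, x = L.foldl (fun a u => Ng u a) (tre (B 0))} = ⊤ :=
  naturalGrowth_generates_general T B hB Bp hBp Ng hNtree

end
end
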